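/- For any element w of a Coxeter group G with standard geometric representation σ and any generator a, exactly one of the following holds: σ_w(a) ≥ 0 (all coordinates nonnegative) and the geodesic length satisfies |wa| = |w|+1, or σ_w(a) ≤ 0 and |wa| = |w|−1. -/

import Mathlib

/-- The defining relators of the Coxeter group with Coxeter matrix `M`. -/
def coxRels {S : Type*} (M : S → S → ℕ) : Set (FreeGroup S) :=
  {r | ∃ i j : S, r = (FreeGroup.of i * FreeGroup.of j) ^ (M i j)}

/-- Evaluation of a word over the generating set in the Coxeter group of `M`. -/
def coxEval {S : Type*} (M : S → S → ℕ) (w : List S) : PresentedGroup (coxRels M) :=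
  (w.map (fun a => PresentedGroup.of (rels := coxRels M) a)).prod

/-- The geodesic length of a group element: the least length of a word representing it. -/
noncomputable def coxLen {S : Type*} (M : S → S → ℕ) (g : PresentedGroup (coxRels M)) : ℕ :=
  sInf {n | ∃ w : List S, coxEval M w = g ∧ w.length = n}

/-- The bilinear-form coefficients of the standard geometric representation:
`B i j = -cos (π / m_{i,j})`, with the convention `B i j = -1` when `m_{i,j} = 0` (i.e. `∞`). -/
noncomputable def coxB {S : Type*} (M : S → S → ℕ) (i j : S) : ℝ :=
  if M i j = 0 then -1 else -Real.cos (Real.pi / (M i j : ℝ))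

/-- The standard geometric representation on a generator:
`σ_{a_i}(v) = v - 2 B(v, a_i) a_i`, so that `σ_{a_i}(a_j) = a_j + 2 cos(π/m_{i,j}) a_i`
(`a_j + 2 a_i` when `m_{i,j} = 0`) and `σ_{a_i}(a_i) = -a_i`. -/
noncomputable def coxSigmaGen {S : Type*} [Fintype S] [DecidableEq S]
    (M : S → S → ℕ) (i : S) (v : S → ℝ) : S → ℝ :=
  fun b => v b - (if b = i then 2 * ∑ j : S, v j * coxB M j i else 0)

/-- The geometric representation of a word `w = a₁ ⋯ aₙ`: `σ_w = σ_{a₁} ∘ ⋯ ∘ σ_{aₙ}`. -/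
noncomputable def coxSigma {S : Type*} [Fintype S] [DecidableEq S]
    (M : S → S → ℕ) (w : List S) : (S → ℝ) → (S → ℝ) :=
  w.foldr (fun i f => (coxSigmaGen M i) ∘ f) id

/-- The unit basis vector of a letter `a`. -/
def unitVec {S : Type*} [DecidableEq S] (a : S) : S → ℝ :=
  fun b => if b = a then 1 else 0

/-!
Tits' argument. `σ_i` is the reflection `v ↦ v - 2 B(v, α_i) α_i` in the cosine form `B`. For
`m = m_{ij} ≥ 2` and `c = cos (π / m)`, the Chebyshev recursion gives
`(σ_i σ_j)^k α_i = U_{2k}(c) α_i + U_{2k-1}(c) α_j`, and `U_n(cos θ) sin θ = sin ((n + 1) θ)`,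
so `(σ_i σ_j)^m` fixes `α_i` and `α_j`. Being `B`-orthogonal and moving vectors only inside the
plane `⟨α_i, α_j⟩`, on which `B` is nondegenerate, it is the identity: `σ` is a representation of
the Coxeter group.

If `ℓ(ws) > ℓ(w)` and `t` is a right descent of `w`, write `w = v u` with `u` a word in `s, t`,
`ℓ(w) = ℓ(v) + |u|` and no right descent of `v` in `{s, t}`. By induction on length
`σ_v(α_s), σ_v(α_t) ≥ 0`. As `u s` is reduced, `u` alternates, ends in `t` and has length
`k < m_{st}`, so `σ_u(α_s)` is a combination of `α_s, α_t` whose coefficients `U_n(c)`,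
`-1 ≤ n ≤ k`, are nonnegative (`U_n(1) = n + 1` covers `m_{st} = ∞`). If `ℓ(ws) < ℓ(w)`, apply
this to `ws` and use `σ_s α_s = -α_s`.
-/

open Polynomial.Chebyshev

namespace LinearMap.BilinForm

variable {R V : Type*} [CommRing R] [AddCommGroup V] [Module R V] (B : LinearMap.BilinForm R V)

noncomputable def reflection {α : V} (hα : B α α = 1) : V ≃ₗ[R] V :=
  Module.reflection (x := α) (f := 2 • B.flip α) (by simp [hα])

variable {B} {α β : V}

theorem reflection_apply (hα : B α α = 1) (v : V) :
    B.reflection hα v = v - (2 * B v α) • α := by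
  simp [reflection, Module.reflection_apply]

@[simp]
theorem reflection_mul_self (hα : B α α = 1) : B.reflection hα * B.reflection hα = 1 :=
  LinearEquiv.ext (Module.involutive_reflection _)

@[simp]
theorem reflection_apply_self (hα : B α α = 1) : B.reflection hα α = -α :=
  Module.reflection_apply_self _

theorem isOrthogonal_reflection (hα : B α α = 1) (hB : B.IsSymm) :
    B.IsOrthogonal (B.reflection hα) := by
  intro u v
  simp only [reflection_apply, map_sub, map_smul, LinearMap.sub_apply, LinearMap.smul_apply,
    smul_eq_mul, hα, hB.eq α v]
  ring

theorem reflection_apply_sub_mem_span (hα : B α α = 1) (v : V) :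
    B.reflection hα v - v ∈ R ∙ α := by
  rw [reflection_apply, sub_sub_cancel_left]
  exact Submodule.neg_mem _ (Submodule.smul_mem _ _ (Submodule.mem_span_singleton_self α))

theorem reflection_mul_reflection_pow_apply_self (hα : B α α = 1) (hβ : B β β = 1) {c : R}
    (hαβ : B α β = -c) (hβα : B β α = -c) (j : ℕ) :
    ((B.reflection hα * B.reflection hβ) ^ j) α =
        (U R (2 * j)).eval c • α + (U R (2 * j - 1)).eval c • β ∧
      (B.reflection hβ * (B.reflection hα * B.reflection hβ) ^ j) α =
        (U R (2 * j)).eval c • α + (U R (2 * j + 1)).eval c • β := by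
  have hβ_step : ∀ a b : R,
      B.reflection hβ (a • α + b • β) = a • α + (2 * c * a - b) • β := by
    intro a b
    simp only [reflection_apply, map_add, map_smul, hαβ, hβ]
    module
  have hα_step : ∀ a b : R,
      B.reflection hα (a • α + b • β) = (2 * c * b - a) • α + b • β := by
    intro a b
    simp only [reflection_apply, map_add, map_smul, hβα, hα]
    module
  induction j with
  | zero =>
    have h := hβ_step 1 0
    simp only [one_smul, zero_smul, add_zero] at h
    simp [h, U_one]
  | succ j ih =>
    have hU : ∀ n : ℤ,
        (U R (n + 1 + 1)).eval c = 2 * c * (U R (n + 1)).eval c - (U R n).eval c := by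
      intro n
      simp [U_add_two, add_assoc, one_add_one_eq_two]
    have hj : (2 * ((j + 1 : ℕ) : ℤ)) = 2 * j + 1 + 1 := by push_cast; ring
    have h₁ : ((B.reflection hα * B.reflection hβ) ^ (j + 1)) α =
        (U R (2 * j + 1 + 1)).eval c • α + (U R (2 * j + 1)).eval c • β := by
      rw [pow_succ', mul_assoc, LinearEquiv.mul_apply, ih.2, hα_step, hU]
    rw [hj, add_sub_cancel_right, LinearEquiv.mul_apply, h₁, hβ_step, hU (2 * j + 1)]
    exact ⟨rfl, rfl⟩

theorem reflection_inv (hα : B α α = 1) : (B.reflection hα)⁻¹ = B.reflection hα := rfl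

theorem isOrthogonal_reflection_mul_reflection_pow (hα : B α α = 1) (hβ : B β β = 1)
    (hB : B.IsSymm) (m : ℕ) : B.IsOrthogonal ((B.reflection hα * B.reflection hβ) ^ m) := by
  induction m with
  | zero => exact fun _ _ => rfl
  | succ m ih =>
    intro u v
    simp only [pow_succ, LinearEquiv.mul_apply]
    rw [ih, isOrthogonal_reflection hα hB, isOrthogonal_reflection hβ hB]

theorem reflection_mul_reflection_pow_apply_sub_mem_span (hα : B α α = 1) (hβ : B β β = 1)
    (m : ℕ) (v : V) :
    ((B.reflection hα * B.reflection hβ) ^ m) v - v ∈ Submodule.span R {α, β} := by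
  have hα' : R ∙ α ≤ Submodule.span R {α, β} := Submodule.span_mono (by simp)
  have hβ' : R ∙ β ≤ Submodule.span R {α, β} := Submodule.span_mono (by simp)
  induction m generalizing v with
  | zero => simp
  | succ m ih =>
    rw [pow_succ, LinearEquiv.mul_apply, LinearEquiv.mul_apply]
    set u := B.reflection hβ v
    rw [show ∀ x : V, x - v = (x - B.reflection hα u) + ((B.reflection hα u - u) + (u - v)) by
      intro x; abel]
    exact add_mem (ih _) (add_mem (hα' (reflection_apply_sub_mem_span hα _))
      (hβ' (reflection_apply_sub_mem_span hβ v)))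

theorem reflection_mul_reflection_pow_eq_one_of_apply_eq [IsDomain R] (hα : B α α = 1)
    (hβ : B β β = 1) (hB : B.IsSymm) {c : R} (hαβ : B α β = -c) (hc : c ^ 2 ≠ 1) {m : ℕ}
    (hmα : ((B.reflection hα * B.reflection hβ) ^ m) α = α)
    (hmβ : ((B.reflection hα * B.reflection hβ) ^ m) β = β) :
    (B.reflection hα * B.reflection hβ) ^ m = 1 := by
  set T := (B.reflection hα * B.reflection hβ) ^ m
  -- `T v - v = a α + b β` is `B`-orthogonal to `α` and `β`, and the Gram matrix of `α, β` has
  -- determinant `1 - c ^ 2 ≠ 0`.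
  have hT : B.IsOrthogonal T := isOrthogonal_reflection_mul_reflection_pow hα hβ hB m
  ext v
  obtain ⟨a, b, hab⟩ := Submodule.mem_span_pair.1
    (reflection_mul_reflection_pow_apply_sub_mem_span hα hβ m v)
  have hzα : B (T v - v) α = 0 := by
    rw [map_sub, LinearMap.sub_apply]
    nth_rw 1 [← hmα]
    rw [hT, sub_self]
  have hzβ : B (T v - v) β = 0 := by
    rw [map_sub, LinearMap.sub_apply]
    nth_rw 1 [← hmβ]
    rw [hT, sub_self]
  rw [← hab] at hzα hzβ
  simp only [map_add, map_smul, LinearMap.add_apply, LinearMap.smul_apply, smul_eq_mul, hα, hβ,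
    hαβ, hB.eq β α] at hzα hzβ
  have ha : a = 0 := by
    have : a * (1 - c ^ 2) = 0 := by linear_combination hzα + c * hzβ
    exact (mul_eq_zero.1 this).resolve_right (sub_ne_zero.2 hc.symm)
  have hb : b = 0 := by linear_combination hzβ + c * ha
  rw [ha, hb, zero_smul, zero_smul, add_zero, eq_comm, sub_eq_zero] at hab
  exact hab

end LinearMap.BilinForm

theorem Real.sin_pi_div_natCast_pos {m : ℕ} (hm : 2 ≤ m) : 0 < Real.sin (Real.pi / m) := by
  have hm' : (2 : ℝ) ≤ m := by exact_mod_cast hm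
  apply Real.sin_pos_of_pos_of_lt_pi (by positivity)
  exact div_lt_self Real.pi_pos (by linarith)

namespace Polynomial.Chebyshev

open Real

variable {m : ℕ}

theorem U_eval_cos_pi_div_nonneg (hm : 2 ≤ m) {n : ℤ} (hn₁ : -1 ≤ n) (hn₂ : n < m) :
    0 ≤ (U ℝ n).eval (cos (π / m)) := by
  have hsin := U_real_cos (π / m) n
  refine nonneg_of_mul_nonneg_left ?_ (sin_pi_div_natCast_pos hm)
  rw [hsin]
  have hn₁' : (0 : ℝ) ≤ n + 1 := by exact_mod_cast (by omega : (0 : ℤ) ≤ n + 1)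
  have hn₂' : (n : ℝ) + 1 ≤ m := by exact_mod_cast (by omega : n + 1 ≤ (m : ℤ))
  apply sin_nonneg_of_nonneg_of_le_pi (by positivity)
  calc ((n : ℝ) + 1) * (π / m) ≤ m * (π / m) := by gcongr
    _ = π := by field_simp

theorem U_eval_cos_pi_div_two_mul (hm : 2 ≤ m) : (U ℝ (2 * m)).eval (cos (π / m)) = 1 := by
  have hm' : (m : ℝ) ≠ 0 := by exact_mod_cast (by omega : m ≠ 0)
  have h := U_real_cos (π / m) (2 * m)
  rw [show ((2 * m : ℤ) + 1 : ℝ) * (π / m) = π / m + 2 * π by push_cast; field_simp; ring,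
    sin_add_two_pi] at h
  exact (mul_eq_right₀ (sin_pi_div_natCast_pos hm).ne').1 h

theorem U_eval_cos_pi_div_two_mul_sub_one (hm : 2 ≤ m) :
    (U ℝ (2 * m - 1)).eval (cos (π / m)) = 0 := by
  have hm' : (m : ℝ) ≠ 0 := by exact_mod_cast (by omega : m ≠ 0)
  have h := U_real_cos (π / m) (2 * m - 1)
  rw [show ((2 * m - 1 : ℤ) + 1 : ℝ) * (π / m) = 2 * π by push_cast; field_simp; ring,
    sin_two_pi] at h
  exact (mul_eq_zero.1 h).resolve_right (sin_pi_div_natCast_pos hm).ne'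

end Polynomial.Chebyshev

namespace LinearMap.BilinForm

open Real Polynomial.Chebyshev

variable {V : Type*} [AddCommGroup V] [Module ℝ V] {B : LinearMap.BilinForm ℝ V} {α β : V}

theorem reflection_mul_reflection_pow_eq_one (hα : B α α = 1) (hβ : B β β = 1) (hB : B.IsSymm)
    {m : ℕ} (hm : 2 ≤ m) (hαβ : B α β = -cos (π / m)) :
    (B.reflection hα * B.reflection hβ) ^ m = 1 := by
  have hβα : B β α = -cos (π / m) := (hB.eq β α).trans hαβ
  have hc : cos (π / m) ^ 2 ≠ 1 := by
    have := sin_pi_div_natCast_pos hm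
    nlinarith [sin_sq_add_cos_sq (π / m)]
  have hfix : ∀ {x y : V} (hx : B x x = 1) (hy : B y y = 1), B x y = -cos (π / m) →
      B y x = -cos (π / m) → ((B.reflection hx * B.reflection hy) ^ m) x = x := by
    intro x y hx hy hxy hyx
    rw [(reflection_mul_reflection_pow_apply_self hx hy hxy hyx m).1,
      U_eval_cos_pi_div_two_mul hm, U_eval_cos_pi_div_two_mul_sub_one hm, one_smul, zero_smul,
      add_zero]
  refine reflection_mul_reflection_pow_eq_one_of_apply_eq hα hβ hB hαβ hc
    (hfix hα hβ hαβ hβα) ?_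
  have hinv : (B.reflection hα * B.reflection hβ) ^ m =
      ((B.reflection hβ * B.reflection hα) ^ m)⁻¹ := by
    rw [← inv_pow, mul_inv_rev, reflection_inv, reflection_inv]
  rw [hinv]
  exact (LinearEquiv.symm_apply_eq _).2 (hfix hβ hα hβα hαβ).symm

end LinearMap.BilinForm

section GeometricRepresentation

open Real

variable {S : Type*} (M : CoxeterMatrix S)

theorem coxB_of_eq_zero {i j : S} (h : M i j = 0) : coxB M i j = -1 :=
  if_pos h

theorem coxB_of_ne_zero {i j : S} (h : M i j ≠ 0) : coxB M i j = -cos (π / M i j) :=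
  if_neg h

theorem coxB_self (i : S) : coxB M i i = 1 := by
  rw [coxB_of_ne_zero M (by simp), M.diagonal]
  simp

theorem coxB_symm (i j : S) : coxB M i j = coxB M j i := by
  rcases eq_or_ne (M i j) 0 with h | h
  · rw [coxB_of_eq_zero M h, coxB_of_eq_zero M (M.symmetric i j ▸ h)]
  · rw [coxB_of_ne_zero M h, coxB_of_ne_zero M (M.symmetric i j ▸ h), M.symmetric]

theorem U_eval_neg_coxB_nonneg {s t : S} (hst : s ≠ t) {n : ℤ} (hn₁ : -1 ≤ n)
    (hn₂ : M s t = 0 ∨ n < M s t) : 0 ≤ (U ℝ n).eval (-coxB M s t) := by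
  rcases eq_or_ne (M s t) 0 with h0 | h0
  · rw [coxB_of_eq_zero M h0, neg_neg, U_eval_one]
    exact_mod_cast (by omega : 0 ≤ n + 1)
  · have hm : 2 ≤ M s t := by have := M.off_diagonal s t hst; omega
    rw [coxB_of_ne_zero M h0, neg_neg]
    exact U_eval_cos_pi_div_nonneg hm hn₁ (hn₂.resolve_left h0)

variable [Fintype S] [DecidableEq S]

noncomputable def coxForm : LinearMap.BilinForm ℝ (S → ℝ) :=
  Matrix.toBilin' (Matrix.of (coxB M))

theorem coxForm_apply_single (v : S → ℝ) (i : S) :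
    coxForm M v (Pi.single i 1) = ∑ j, v j * coxB M j i := by
  simp [coxForm, Matrix.toBilin'_apply', dotProduct]

theorem coxForm_single (i j : S) : coxForm M (Pi.single i 1) (Pi.single j 1) = coxB M i j :=
  Matrix.toBilin'_single _ i j

theorem coxForm_isSymm : (coxForm M).IsSymm :=
  Matrix.isSymm_toBilin'_iff_isSymm.2 (Matrix.IsSymm.ext fun i j => coxB_symm M j i)

theorem coxForm_single_self (i : S) : coxForm M (Pi.single i 1) (Pi.single i 1) = 1 := by
  rw [coxForm_single, coxB_self]

noncomputable def coxReflection (i : S) : (S → ℝ) ≃ₗ[ℝ] (S → ℝ) :=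
  (coxForm M).reflection (coxForm_single_self M i)

theorem coxSigmaGen_eq_coxReflection (i : S) : coxSigmaGen M i = coxReflection M i := by
  ext v b
  rw [coxReflection, LinearMap.BilinForm.reflection_apply, coxForm_apply_single]
  by_cases hb : b = i
  · subst hb; simp [coxSigmaGen]
  · simp [coxSigmaGen, hb]

theorem isLiftable_coxReflection : M.IsLiftable (coxReflection M) := by
  intro i j
  rcases eq_or_ne i j with rfl | hij
  · rw [M.diagonal, pow_one]
    exact LinearMap.BilinForm.reflection_mul_self _
  rcases eq_or_ne (M i j) 0 with h0 | h0
  · rw [h0, pow_zero]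
  have hm : 2 ≤ M i j := by have := M.off_diagonal i j hij; omega
  exact LinearMap.BilinForm.reflection_mul_reflection_pow_eq_one _ _ (coxForm_isSymm M) hm
    (by rw [coxForm_single, coxB_of_ne_zero M h0])

end GeometricRepresentation

namespace CoxeterSystem

variable {B W : Type*} [Group W] {M : CoxeterMatrix B} (cs : CoxeterSystem M W)

local prefix:100 "π " => cs.wordProd
local prefix:100 "ℓ " => cs.length

theorem exists_eq_mul_wordProd_pair (w : W) (s t : B) :
    ∃ v d, (∀ x ∈ d, x = s ∨ x = t) ∧ w = v * π d ∧ ℓ w = ℓ v + d.length ∧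
      ¬cs.IsRightDescent v s ∧ ¬cs.IsRightDescent v t := by
  induction hn : ℓ w using Nat.strong_induction_on generalizing w with
  | _ n ih =>
  by_cases hx : ∃ x, (x = s ∨ x = t) ∧ cs.IsRightDescent w x
  · obtain ⟨x, hx, hdesc⟩ := hx
    obtain ⟨v, d, hd, hw, hlen, hvs, hvt⟩ := ih _ (hn ▸ hdesc) (w * cs.simple x) rfl
    refine ⟨v, d ++ [x], ?_, ?_, ?_, hvs, hvt⟩
    · simpa [or_imp, forall_and] using ⟨hd, hx⟩
    · rw [wordProd_append, wordProd_singleton, ← mul_assoc, ← hw,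
        simple_mul_simple_cancel_right]
    · rw [isRightDescent_iff] at hdesc
      simp only [List.length_append, List.length_singleton]
      omega
  · push Not at hx
    exact ⟨w, [], by simp, by simp, by simp [← hn], hx s (Or.inl rfl), hx t (Or.inr rfl)⟩

variable {cs} in
theorem IsReduced.alternatingWord_append_singleton_eq {i j x : B} {n : ℕ}
    (hred : cs.IsReduced (alternatingWord i j n ++ [x])) (hx : x = i ∨ x = j) :
    alternatingWord i j n ++ [x] = alternatingWord j i (n + 1) ∨
      alternatingWord i j n ++ [x] = alternatingWord i j (n + 1) := by
  rcases hx with rfl | rfl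
  · left
    rw [alternatingWord_succ, List.concat_eq_append]
  cases n with
  | zero => exact Or.inr rfl
  | succ k =>
    exfalso
    have hprod : π (alternatingWord i x (k + 1) ++ [x]) = π (alternatingWord x i k) := by
      rw [alternatingWord_succ, List.concat_eq_append, wordProd_append, wordProd_append,
        wordProd_singleton, simple_mul_simple_cancel_right]
    have := cs.length_wordProd_le (alternatingWord x i k)
    rw [IsReduced, hprod] at hred
    simp only [List.length_append, length_alternatingWord, List.length_singleton] at hred this
    omega

variable {cs} in
theorem IsReduced.eq_alternatingWord {d : List B} {s t : B} (hred : cs.IsReduced d)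
    (hd : ∀ x ∈ d, x = s ∨ x = t) :
    d = alternatingWord s t d.length ∨ d = alternatingWord t s d.length := by
  induction d using List.reverseRecOn with
  | nil => exact Or.inl rfl
  | append_singleton d x ih =>
    have hx := hd x (by simp)
    have hred' : cs.IsReduced d := by simpa using hred.take d.length
    rw [List.length_append, List.length_singleton]
    rcases ih hred' (fun y hy => hd y (by simp [hy])) with h | h <;> rw [h] at hred
    · simpa only [← h] using (hred.alternatingWord_append_singleton_eq hx).symm
    · simpa only [← h] using hred.alternatingWord_append_singleton_eq hx.symm

variable {cs} in
theorem IsReduced.eq_alternatingWord_of_append_singleton {d : List B} {s t : B} (hst : s ≠ t)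
    (hred : cs.IsReduced (d ++ [s])) (hd : ∀ x ∈ d, x = s ∨ x = t) :
    d = alternatingWord s t d.length ∧ (M s t = 0 ∨ d.length < M s t) := by
  have hd' : ∀ x ∈ d ++ [s], x = s ∨ x = t := by simpa [or_imp, forall_and] using hd
  rcases hred.eq_alternatingWord hd' with h | h <;>
    rw [List.length_append, List.length_singleton] at h
  · rw [alternatingWord_succ, List.concat_eq_append] at h
    exact absurd (List.singleton_inj.1 (List.append_inj' h rfl).2) hst
  rw [h] at hred
  refine ⟨?_, ?_⟩
  · rw [alternatingWord_succ, List.concat_eq_append] at h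
    exact List.append_cancel_right h
  · by_contra hM
    push Not at hM
    exact cs.not_isReduced_alternatingWord t s (M.symmetric s t ▸ hM.1)
      (by rw [M.symmetric]; omega) hred

section GeometricRepresentation

variable [Fintype B] [DecidableEq B]

noncomputable def geometricRep : W →* (B → ℝ) ≃ₗ[ℝ] (B → ℝ) :=
  cs.lift ⟨coxReflection M, isLiftable_coxReflection M⟩

theorem geometricRep_simple (i : B) : cs.geometricRep (cs.simple i) = coxReflection M i :=
  cs.lift_apply_simple _ i

theorem geometricRep_wordProd (ω : List B) : ⇑(cs.geometricRep (π ω)) = coxSigma M ω := by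
  induction ω with
  | nil => rw [wordProd_nil, map_one, LinearEquiv.coe_one]; rfl
  | cons i ω ih =>
    ext v
    rw [wordProd_cons, map_mul, LinearEquiv.mul_apply, ih, geometricRep_simple,
      ← coxSigmaGen_eq_coxReflection]
    rfl

theorem geometricRep_alternatingWord_apply_single {s t : B} (hst : s ≠ t) {k : ℕ}
    (hk : M s t = 0 ∨ k < M s t) :
    ∃ a b : ℝ, 0 ≤ a ∧ 0 ≤ b ∧
      cs.geometricRep (π (alternatingWord s t k)) (Pi.single s 1) =
        a • Pi.single s 1 + b • Pi.single t 1 := by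
  have hU : ∀ n : ℤ, -1 ≤ n → n ≤ k → 0 ≤ (U ℝ n).eval (-coxB M s t) :=
    fun _ hn₁ hn₂ => U_eval_neg_coxB_nonneg M hst hn₁ (hk.imp_right fun hk => by omega)
  have hst' : coxForm M (Pi.single s 1) (Pi.single t 1) = -(-coxB M s t) := by
    rw [coxForm_single, neg_neg]
  have hts' : coxForm M (Pi.single t 1) (Pi.single s 1) = -(-coxB M s t) := by
    rw [coxForm_single, coxB_symm, neg_neg]
  have hform := LinearMap.BilinForm.reflection_mul_reflection_pow_apply_self
    (coxForm_single_self M s) (coxForm_single_self M t) hst' hts' (k / 2)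
  rw [prod_alternatingWord_eq_mul_pow, map_mul, map_pow, map_mul, geometricRep_simple,
    geometricRep_simple]
  obtain ⟨j, rfl | rfl⟩ := Nat.even_or_odd' k
  · rw [if_pos (even_two_mul j), map_one, one_mul, Nat.mul_div_cancel_left j two_pos]
    rw [Nat.mul_div_cancel_left j two_pos] at hform
    refine ⟨_, _, hU _ ?_ ?_, hU _ ?_ ?_, hform.1⟩ <;> omega
  · have hodd : ¬Even (2 * j + 1) := Nat.not_even_iff_odd.2 (odd_two_mul_add_one j)
    rw [if_neg hodd, show (2 * j + 1) / 2 = j by omega, geometricRep_simple]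
    rw [show (2 * j + 1) / 2 = j by omega] at hform
    refine ⟨_, _, hU _ ?_ ?_, hU _ ?_ ?_, hform.2⟩ <;> omega

theorem geometricRep_apply_single_nonneg {w : W} {s : B} (h : ¬cs.IsRightDescent w s) :
    0 ≤ cs.geometricRep w (Pi.single s 1) := by
  induction hn : ℓ w using Nat.strong_induction_on generalizing w s with
  | _ n ih =>
  rcases eq_or_ne w 1 with rfl | hw
  · simp
  obtain ⟨t, ht⟩ := cs.exists_rightDescent_of_ne_one hw
  have hst : s ≠ t := by rintro rfl; exact h ht
  obtain ⟨v, d, hd, rfl, hlen, hvs, hvt⟩ := cs.exists_eq_mul_wordProd_pair w s t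
  have hd_ne : d ≠ [] := by rintro rfl; exact hvt (by simpa using ht)
  have hv : ℓ v < n := by
    have := List.length_pos_iff.2 hd_ne
    omega
  have hred : cs.IsReduced (d ++ [s]) := by
    rw [not_isRightDescent_iff, mul_assoc, ← wordProd_singleton, ← wordProd_append] at h
    have h₁ := cs.length_mul_le v (π (d ++ [s]))
    have h₂ := cs.length_wordProd_le (d ++ [s])
    rw [IsReduced]
    simp only [List.length_append, List.length_singleton] at h₂ ⊢
    omega
  obtain ⟨hdalt, hk⟩ := hred.eq_alternatingWord_of_append_singleton hst hd
  obtain ⟨a, b, ha, hb, hab⟩ := cs.geometricRep_alternatingWord_apply_single hst hk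
  rw [map_mul, LinearEquiv.mul_apply, hdalt, hab, map_add, map_smul, map_smul]
  exact add_nonneg (smul_nonneg ha (ih _ hv hvs rfl)) (smul_nonneg hb (ih _ hv hvt rfl))

theorem geometricRep_apply_single_nonpos {w : W} {s : B} (h : cs.IsRightDescent w s) :
    cs.geometricRep w (Pi.single s 1) ≤ 0 := by
  rw [isRightDescent_iff_not_isRightDescent_mul] at h
  have := cs.geometricRep_apply_single_nonneg h
  rwa [map_mul, LinearEquiv.mul_apply, geometricRep_simple, coxReflection,
    LinearMap.BilinForm.reflection_apply_self, map_neg, neg_nonneg] at this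

end GeometricRepresentation

end CoxeterSystem

theorem unitVec_eq_single {S : Type*} [DecidableEq S] (a : S) : unitVec a = Pi.single a 1 := by
  ext b
  simp [unitVec, Pi.single_apply]

section Presentation

variable {S : Type*} (M : S → S → ℕ) (hsym : ∀ i j, M i j = M j i)
  (hdiag : ∀ i j, M i j = 1 ↔ i = j)

def coxMatrix : CoxeterMatrix S where
  M := M
  isSymm := Matrix.IsSymm.ext fun i j => hsym j i
  diagonal i := (hdiag i i).2 rfl
  off_diagonal i j hij h := hij ((hdiag i j).1 h)

theorem coxRels_eq_relationsSet : coxRels M = (coxMatrix M hsym hdiag).relationsSet :=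
  Set.ext fun _ => ⟨fun ⟨i, j, h⟩ => ⟨(i, j), h.symm⟩, fun ⟨⟨i, j⟩, h⟩ => ⟨i, j, h.symm⟩⟩

def coxSystem : CoxeterSystem (coxMatrix M hsym hdiag) (PresentedGroup (coxRels M)) :=
  ⟨QuotientGroup.quotientMulEquivOfEq
    (congrArg Subgroup.normalClosure (coxRels_eq_relationsSet M hsym hdiag))⟩

theorem coxEval_eq_wordProd (w : List S) : coxEval M w = (coxSystem M hsym hdiag).wordProd w :=
  rfl

theorem coxLen_eq_length (g : PresentedGroup (coxRels M)) :
    coxLen M g = (coxSystem M hsym hdiag).length g := by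
  set cs := coxSystem M hsym hdiag
  obtain ⟨ω, hω, rfl⟩ := cs.exists_isReduced g
  refine le_antisymm (Nat.sInf_le ⟨ω, rfl, hω.symm⟩) (le_csInf ⟨_, ω, rfl, rfl⟩ ?_)
  rintro _ ⟨w, hw, rfl⟩
  rw [coxEval_eq_wordProd M hsym hdiag] at hw
  exact hw ▸ cs.length_wordProd_le w

end Presentation

/-- For every element `w` of a Coxeter group and every generator `a`, exactly one of the
following holds: `σ_w(a) ≥ 0` coordinatewise and `|wa| = |w| + 1`, or `σ_w(a) ≤ 0`
coordinatewise and `|wa| = |w| - 1`. -/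
theorem coxeter_sigma_sign_length {S : Type*} [Fintype S] [DecidableEq S]
    (M : S → S → ℕ)
    (hsym : ∀ i j, M i j = M j i)
    (hdiag : ∀ i j, M i j = 1 ↔ i = j)
    (w : List S) (a : S) :
    Xor'
      ((∀ b : S, 0 ≤ coxSigma M w (unitVec a) b) ∧
        coxLen M (coxEval M (w ++ [a])) = coxLen M (coxEval M w) + 1)
      ((∀ b : S, coxSigma M w (unitVec a) b ≤ 0) ∧
        coxLen M (coxEval M w) = coxLen M (coxEval M (w ++ [a])) + 1) := by
  set cs := coxSystem M hsym hdiag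
  have hσ : coxSigma M w (unitVec a) = cs.geometricRep (cs.wordProd w) (Pi.single a 1) := by
    rw [cs.geometricRep_wordProd, unitVec_eq_single]
    rfl
  have hℓ : ∀ g, coxLen M g = cs.length g := coxLen_eq_length M hsym hdiag
  have hπ : ∀ w, coxEval M w = cs.wordProd w := coxEval_eq_wordProd M hsym hdiag
  simp only [hℓ, hπ, cs.wordProd_append, cs.wordProd_singleton, hσ, ← Pi.le_def]
  rcases cs.length_mul_simple (cs.wordProd w) a with h | h
  · exact Or.inl ⟨⟨cs.geometricRep_apply_single_nonneg (cs.not_isRightDescent_iff.2 h), h⟩,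
      fun h' => by omega⟩
  · exact Or.inr ⟨⟨cs.geometricRep_apply_single_nonpos (cs.isRightDescent_iff.2 h), h.symm⟩,
      fun h' => by omega⟩
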